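/- arXiv:1401.3067 — 5 statements merged into one kernel-verified Lean document; each statement's English description precedes it below -/
import Mathlib

section
/- Let $\{A_i\}_{i\in I}$ be a filtered direct system of commutative rings with direct limit $A$, and let $u_i : A_i \to A$ denote the canonical ring homomorphisms. If $E$ is a finitely presented $A$-module, then there exists an index $i_0 \in I$ and a finitely presented $A_{i_0}$-module $E_{i_0}$ such that the base change $A \otimes_{A_{i_0}} E_{i_0}$ (along $u_{i_0}$) is isomorphic to $E$ as an $A$-module. -/
/-!
Choose a finite presentation of `E` over `B`. Its finitely many relation coefficients all come
from a single stage `A i₀`, so the same generators and lifted relations present a finitely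
presented `A i₀`-module `E₀`. Base change is right exact, hence carries a presentation of `E₀`
to a presentation of `B ⊗[A i₀] E₀` by the image relations, which are those of `E`.
-/

open TensorProduct

/-- `B`, together with the canonical maps `u i : A i →+* B`, is the direct limit
(filtered colimit) of the filtered direct system of commutative rings
`{A i, f i j : A i →+* A j (i ≤ j)}` indexed by the directed set `I`. -/
structure IsFilteredRingColimit {I : Type*} [Preorder I]
    (A : I → Type*) [∀ i, CommRing (A i)]
    (f : ∀ i j, i ≤ j → (A i →+* A j))
    (B : Type*) [CommRing B] (u : ∀ i, A i →+* B) : Prop where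
  directed : ∀ i j : I, ∃ k, i ≤ k ∧ j ≤ k
  map_self : ∀ i (x : A i), f i i le_rfl x = x
  map_map : ∀ (i j k : I) (hij : i ≤ j) (hjk : j ≤ k) (x : A i),
    f j k hjk (f i j hij x) = f i k (hij.trans hjk) x
  compat : ∀ i j (h : i ≤ j) (x : A i), u j (f i j h x) = u i x
  exhaust : ∀ b : B, ∃ (i : I) (x : A i), u i x = b
  eq_stage : ∀ i (x y : A i), u i x = u i y → ∃ (j : I) (h : i ≤ j), f i j h x = f i j h y

namespace Module.Relations

variable {R S : Type*} [CommRing R] [CommRing S]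

-- Reducible, so that generators and relations of the base change are literally those of
-- `relations` (needed to transport solutions and `Finite` instances).
noncomputable abbrev baseChange (φ : R →+* S) (relations : Relations R) : Relations S where
  G := relations.G
  R := relations.R
  relation r := Finsupp.mapRange φ φ.map_zero (relations.relation r)

theorem finitePresentation_quotient (relations : Relations R) [Finite relations.G]
    [Finite relations.R] : FinitePresentation R relations.Quotient :=
  finitePresentation_of_free_of_surjective relations.toQuotient relations.surjective_toQuotient
    (relations.ker_toQuotient ▸ Submodule.fg_span (Set.finite_range _))

variable [Algebra R S] {relations : Relations R}

namespace Solution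

variable {N : Type*} [AddCommGroup N] [Module S N] [Module R N] [IsScalarTower R S N]

def restrictScalars (t : (relations.baseChange (algebraMap R S)).Solution N) :
    relations.Solution N where
  var := t.var
  linearCombination_var_relation r := by
    rw [← t.linearCombination_var_relation r]
    simp [Finsupp.linearCombination_apply, Finsupp.sum_mapRange_index]

theorem IsPresentation.isBaseChange {M : Type*} [AddCommGroup M] [Module R M]
    {s : relations.Solution M} (hs : s.IsPresentation)
    {t : (relations.baseChange (algebraMap R S)).Solution N} (ht : t.IsPresentation) :
    IsBaseChange S (hs.desc t.restrictScalars) := by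
  refine IsBaseChange.of_right_exact S
    (Finsupp.mapRange.linearMap (Algebra.linearMap R S))
    (Finsupp.mapRange.linearMap (Algebra.linearMap R S)) _ ?_ ?_
    ((IsBaseChange.linearMap R S).finsuppPow _) ((IsBaseChange.linearMap R S).finsuppPow _)
    hs.exact hs.surjective_π ht.exact ht.surjective_π
  · ext r
    simp [Relations.map_single]
  · ext g
    simp [restrictScalars, Solution.π_single]

end Solution

end Module.Relations

namespace IsFilteredRingColimit

variable {I : Type*} [Preorder I] {A : I → Type*} [∀ i, CommRing (A i)]
  {f : ∀ i j, i ≤ j → (A i →+* A j)} {B : Type*} [CommRing B] {u : ∀ i, A i →+* B}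

theorem exists_lift (hcolim : IsFilteredRingColimit A f B u) {ι : Type*} [Finite ι]
    (b : ι → B) : ∃ i, ∃ a : ι → A i, ∀ k, u i (a k) = b k := by
  choose idx y hy using fun k => hcolim.exhaust (b k)
  have : Nonempty I := ⟨(hcolim.exhaust 0).choose⟩
  have : IsDirectedOrder I := ⟨hcolim.directed⟩
  obtain ⟨i, hi⟩ := Finite.exists_le idx
  exact ⟨i, fun k => f (idx k) i (hi k) (y k), fun k => by rw [hcolim.compat, hy]⟩

theorem exists_relations_baseChange_eq (hcolim : IsFilteredRingColimit A f B u)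
    (relations : Module.Relations B) [Finite relations.G] [Finite relations.R] :
    ∃ i, ∃ relations₀ : Module.Relations (A i), relations₀.baseChange (u i) = relations := by
  obtain ⟨G, R, relation⟩ := relations
  obtain ⟨i, a, ha⟩ := hcolim.exists_lift fun p : R × G => relation p.1 p.2
  refine ⟨i, ⟨G, R, fun r => Finsupp.equivFunOnFinite.symm fun g => a (r, g)⟩, ?_⟩
  simp only [Module.Relations.baseChange, Module.Relations.mk.injEq, heq_eq_eq, true_and]
  ext r g
  simp [ha]

end IsFilteredRingColimit

/-- **Reduction of finitely presented modules to a finite stage.**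
Let `{A i}` be a filtered direct system of commutative rings with direct limit `B`,
with canonical homomorphisms `u i : A i →+* B`.  If `E` is a finitely presented
`B`-module, then there exist an index `i₀` and a finitely presented `A i₀`-module
`E₀` such that the base change `B ⊗[A i₀] E₀` (along `u i₀`) is isomorphic to `E`
as a `B`-module. -/
theorem finitePresentation_module_descends_to_finite_stage
    {I : Type} [Preorder I] (A : I → Type) [∀ i, CommRing (A i)]
    (f : ∀ i j, i ≤ j → (A i →+* A j))
    (B : Type) [CommRing B] (u : ∀ i, A i →+* B)
    (hcolim : IsFilteredRingColimit A f B u)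
    (E : Type) [AddCommGroup E] [Module B E] [Module.FinitePresentation B E] :
    ∃ (i₀ : I) (E₀ : Type) (_ : AddCommGroup E₀) (_ : Module (A i₀) E₀),
      Module.FinitePresentation (A i₀) E₀ ∧
      Nonempty (letI := (u i₀).toAlgebra; (B ⊗[A i₀] E₀) ≃ₗ[B] E) := by
  obtain ⟨⟨relations, solution, hsolution⟩, _, _⟩ :=
    (Module.finitePresentation_iff_exists_presentation.{0, 0}).mp ‹_›
  obtain ⟨i₀, relations₀, rfl⟩ := hcolim.exists_relations_baseChange_eq relations
  let := (u i₀).toAlgebra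
  let : Module (A i₀) E := Module.compHom E (u i₀)
  have : IsScalarTower (A i₀) B E := IsScalarTower.of_algebraMap_smul fun _ _ => rfl
  exact ⟨i₀, relations₀.Quotient, inferInstance, inferInstance,
    relations₀.finitePresentation_quotient,
    ⟨((Module.Relations.Solution.ofQuotient_isPresentation relations₀).isBaseChange
      hsolution).equiv⟩⟩
end

section
/- Let $\{A_i\}_{i\in I}$ be a filtered direct system of commutative rings with direct limit $A$, and let $u_i : A_i \to A$ denote the canonical ring homomorphisms. If $E$ is a finitely presented (commutative) $A$-algebra, then there exists an index $i_0 \in I$ and a finitely presented $A_{i_0}$-algebra $E_{i_0}$ such that the base change $A \otimes_{A_{i_0}} E_{i_0}$ (along $u_{i_0}$) is isomorphic to $E$ as an $A$-algebra. -/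
/-!
A presentation `E ≅ B[X₁,…,Xₙ]/(p₁,…,pₘ)` involves only finitely many coefficients from `B`.
Since `B` is a filtered colimit, all of them come from a single stage `A i₀`, so the relations
lift to polynomials `q₁,…,qₘ` over `A i₀`. Base change commutes with forming polynomial rings and
quotients, hence `B ⊗[A i₀] A i₀[X]/(q₁,…,qₘ) ≅ B[X]/(p₁,…,pₘ) ≅ E`.
-/

open TensorProduct

open Filter

namespace IsFilteredRingColimit

variable {I : Type*} [Preorder I] {A : I → Type*} [∀ i, CommRing (A i)]
  {f : ∀ i j, i ≤ j → (A i →+* A j)} {B : Type*} [CommRing B] {u : ∀ i, A i →+* B}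
  (hc : IsFilteredRingColimit A f B u)
include hc

theorem atTop_neBot : (atTop : Filter I).NeBot :=
  have : Nonempty I := ⟨(hc.exhaust 0).choose⟩
  have : IsDirectedOrder I := ⟨hc.directed⟩
  inferInstance

theorem eventually_mem_range (b : B) : ∀ᶠ i in atTop, b ∈ Set.range (u i) := by
  obtain ⟨i, x, rfl⟩ := hc.exhaust b
  exact mem_of_superset (Ici_mem_atTop i) fun j hij => ⟨f i j hij x, hc.compat i j hij x⟩

theorem eventually_mem_range_map {σ : Type*} (p : MvPolynomial σ B) :
    ∀ᶠ i in atTop, p ∈ Set.range (MvPolynomial.map (u i)) := by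
  simp only [MvPolynomial.mem_range_map_iff_coeffs_subset]
  exact (eventually_all_finset p.coeffs).2 fun b _ => hc.eventually_mem_range b

theorem exists_finset_image_map_eq {σ : Type*} (s : Finset (MvPolynomial σ B)) :
    ∃ (i : I) (t : Finset (MvPolynomial σ (A i))), MvPolynomial.map (σ := σ) (u i) '' t = s := by
  classical
  have := hc.atTop_neBot
  obtain ⟨i, hi⟩ := ((eventually_all_finset s).2 fun p _ => hc.eventually_mem_range_map p).exists
  obtain ⟨t, -, ht⟩ := (Finset.subset_set_image_iff (s := Set.univ)
    (f := MvPolynomial.map (u i))).1 (by rwa [Set.image_univ])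
  exact ⟨i, t, by rw [← Finset.coe_image, ht]⟩

end IsFilteredRingColimit

namespace MvPolynomial

variable {σ R : Type*} (S : Type*) [CommRing R] [CommRing S] [Algebra R S]

noncomputable def algebraTensorQuotientAlgEquiv (J : Ideal (MvPolynomial σ R)) :
    S ⊗[R] (MvPolynomial σ R ⧸ J) ≃ₐ[S]
      MvPolynomial σ S ⧸ J.map (MvPolynomial.map (algebraMap R S)) :=
  (Algebra.TensorProduct.tensorQuotientEquiv S _ S J).trans <|
    Ideal.quotientEquivAlg _ _ (algebraTensorAlgEquiv R S) <| by
      rw [← Ideal.map_coe Algebra.TensorProduct.includeRight, Ideal.map_map]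
      congr
      ext <;> simp

end MvPolynomial

/-- **Reduction of finitely presented algebras to a finite stage.**
Let `{A i}` be a filtered direct system of commutative rings with direct limit `B`,
with canonical homomorphisms `u i : A i →+* B`.  If `E` is a finitely presented
(commutative) `B`-algebra, then there exist an index `i₀` and a finitely presented
`A i₀`-algebra `E₀` such that the base change `B ⊗[A i₀] E₀` (along `u i₀`) is
isomorphic to `E` as a `B`-algebra. -/
theorem finitePresentation_algebra_descends_to_finite_stage
    {I : Type} [Preorder I] (A : I → Type) [∀ i, CommRing (A i)]
    (f : ∀ i j, i ≤ j → (A i →+* A j))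
    (B : Type) [CommRing B] (u : ∀ i, A i →+* B)
    (hcolim : IsFilteredRingColimit A f B u)
    (E : Type) [CommRing E] [Algebra B E] [Algebra.FinitePresentation B E] :
    ∃ (i₀ : I) (E₀ : Type) (_ : CommRing E₀) (_ : Algebra (A i₀) E₀),
      Algebra.FinitePresentation (A i₀) E₀ ∧
      Nonempty (letI := (u i₀).toAlgebra; (B ⊗[A i₀] E₀) ≃ₐ[B] E) := by
  obtain ⟨n, φ, hφ, s, hs⟩ := Algebra.FinitePresentation.out (R := B) (A := E)
  obtain ⟨i₀, t, ht⟩ := hcolim.exists_finset_image_map_eq s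
  let := (u i₀).toAlgebra
  refine ⟨i₀, MvPolynomial (Fin n) (A i₀) ⧸ Ideal.span (t : Set _), inferInstance, inferInstance,
    .quotient ⟨t, rfl⟩, ⟨(MvPolynomial.algebraTensorQuotientAlgEquiv B _).trans <|
      (Ideal.quotientEquivAlgOfEq B ?_).trans (Ideal.quotientKerAlgEquivOfSurjective hφ)⟩⟩
  rw [Ideal.map_span, RingHom.algebraMap_toAlgebra, ht, hs]
  rfl
end

section
/- Let $\{A_i\}_{i\in I}$ be a filtered direct system of commutative rings with direct limit $A$. Let $E$ be a finitely presented $A$-module, and suppose $E_{i_0}$ is a finitely presented $A_{i_0}$-module and $E_{i_1}$ is a finitely presented $A_{i_1}$-module such that $A \otimes_{A_{i_0}} E_{i_0} \cong E$ and $A \otimes_{A_{i_1}} E_{i_1} \cong E$ as $A$-modules. Then there exists an index $i_2 \in I$ with $i_2 \ge i_0$ and $i_2 \ge i_1$ such that $A_{i_2} \otimes_{A_{i_0}} E_{i_0} \cong A_{i_2} \otimes_{A_{i_1}} E_{i_1}$ as $A_{i_2}$-modules. -/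
/-!
Fix `k ≥ i₀, i₁` and base change `E₀`, `E₁` to finitely presented `A k`-modules `M`, `N`.
For every `A k`-module `P`, `B ⊗ P` is the filtered colimit of the `A j ⊗ P` (`j ≥ k`), and a
finitely presented module is compact: a linear map from it into a filtered colimit factors
through some stage, and two factorizations that agree in the colimit agree at a later stage.
An `A j`-linear map `A j ⊗ M → A j ⊗ N` is the same as an `A k`-linear map `M → A j ⊗ N`, so
`B ⊗ M ≃ B ⊗ N` and its inverse descend to some stage, and the two composites become the
identity at a later one.
-/

open TensorProduct

open Filter LinearMap

namespace LinearMap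

variable {R S T M N P : Type*} [CommSemiring R] [CommSemiring S] [CommSemiring T]
  [Algebra R S] [Algebra R T] [AddCommMonoid M] [Module R M] [AddCommMonoid N] [Module R N]
  [AddCommMonoid P] [Module R P]

theorem rTensor_algHom_smul (w : S →ₐ[R] T) (s : S) (x : S ⊗[R] M) :
    rTensor M w.toLinearMap (s • x) = w s • rTensor M w.toLinearMap x := by
  induction x with
  | zero => simp
  | tmul a m => simp [smul_tmul']
  | add x y hx hy => simp only [smul_add, map_add, hx, hy]

theorem rTensor_comp_mk_one (w : S →ₐ[R] T) :
    rTensor M w.toLinearMap ∘ₗ TensorProduct.mk R S M 1 = TensorProduct.mk R T M 1 := by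
  ext; simp

theorem rTensor_comp_liftBaseChange_comp (w : S →ₐ[R] T) (α : M →ₗ[R] S ⊗[R] N)
    (β : N →ₗ[R] S ⊗[R] P) :
    rTensor P w.toLinearMap ∘ₗ (β.liftBaseChange S).restrictScalars R ∘ₗ α =
      ((rTensor P w.toLinearMap ∘ₗ β).liftBaseChange T).restrictScalars R ∘ₗ
        rTensor N w.toLinearMap ∘ₗ α := by
  ext m
  simp only [comp_apply, restrictScalars_apply]
  induction α m with
  | zero => simp
  | tmul s n => simp [rTensor_algHom_smul]
  | add x y hx hy => simp only [map_add, hx, hy]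

end LinearMap

noncomputable def LinearEquiv.ofLiftBaseChange {R S M N : Type*} [CommSemiring R] [CommSemiring S]
    [Algebra R S] [AddCommMonoid M] [Module R M] [AddCommMonoid N] [Module R N]
    (α : M →ₗ[R] S ⊗[R] N) (β : N →ₗ[R] S ⊗[R] M)
    (hβα : (β.liftBaseChange S).restrictScalars R ∘ₗ α = TensorProduct.mk R S M 1)
    (hαβ : (α.liftBaseChange S).restrictScalars R ∘ₗ β = TensorProduct.mk R S N 1) :
    S ⊗[R] M ≃ₗ[S] S ⊗[R] N :=
  .ofLinearMap (α.liftBaseChange S) (β.liftBaseChange S)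
    (AlgebraTensorModule.ext fun s n => by
      simpa [smul_tmul'] using congr_arg (s • ·) (LinearMap.congr_fun hαβ n))
    (AlgebraTensorModule.ext fun s m => by
      simpa [smul_tmul'] using congr_arg (s • ·) (LinearMap.congr_fun hβα m))

namespace Module.DirectLimit

section Semiring

variable {R : Type*} [Semiring R] {ι : Type*} [Preorder ι] [DecidableEq ι] [IsDirectedOrder ι]
  {G : ι → Type*} [∀ i, AddCommMonoid (G i)] [∀ i, Module R (G i)]
  {f : ∀ i j, i ≤ j → G i →ₗ[R] G j} {M : Type*} [AddCommMonoid M] [Module R M]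

theorem eventually_exists_of_eq [Nonempty ι] (z : DirectLimit G f) :
    ∀ᶠ i in atTop, ∃ x, of R ι G f i x = z := by
  obtain ⟨i, x, rfl⟩ := exists_of z
  filter_upwards [eventually_ge_atTop i] with j hij
  exact ⟨f i j hij x, of_f⟩

theorem eventually_exists_comp_eq_of_basis [Nonempty ι] {κ : Type*} [Finite κ]
    (b : Basis κ R M) (φ : M →ₗ[R] DirectLimit G f) :
    ∀ᶠ i in atTop, ∃ ψ : M →ₗ[R] G i, of R ι G f i ∘ₗ ψ = φ := by
  filter_upwards [eventually_all.2 fun k => eventually_exists_of_eq (φ (b k))] with i hi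
  choose y hy using hi
  exact ⟨b.constr ℕ y, b.ext fun k => by simp [hy]⟩

variable [DirectedSystem G (f · · ·)]

theorem eventually_map_eq_of_of_eq {i : ι} {x y : G i} (h : of R ι G f i x = of R ι G f i y) :
    ∀ᶠ j in atTop, ∀ hij : i ≤ j, f i j hij x = f i j hij y := by
  obtain ⟨k, hik, hk⟩ := exists_eq_of_of_eq h
  filter_upwards [eventually_ge_atTop k] with j hkj hij
  rw [← DirectedSystem.map_map' f hik hkj x, ← DirectedSystem.map_map' f hik hkj y, hk]

theorem eventually_comp_eq_of_of_comp_eq [Module.Finite R M] {i : ι} {φ ψ : M →ₗ[R] G i}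
    (h : of R ι G f i ∘ₗ φ = of R ι G f i ∘ₗ ψ) :
    ∀ᶠ j in atTop, ∀ hij : i ≤ j, f i j hij ∘ₗ φ = f i j hij ∘ₗ ψ := by
  obtain ⟨s, hs⟩ := Module.Finite.fg_top (R := R) (M := M)
  filter_upwards [(eventually_all_finset s).2 fun x _ =>
    eventually_map_eq_of_of_eq (LinearMap.congr_fun h x)] with j hj hij
  exact LinearMap.ext_on hs fun x hx => hj x hx hij

end Semiring

variable {R : Type*} [Ring R] {ι : Type*} [Preorder ι] [DecidableEq ι] [IsDirectedOrder ι]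
  [Nonempty ι] {G : ι → Type*} [∀ i, AddCommGroup (G i)] [∀ i, Module R (G i)]
  {f : ∀ i j, i ≤ j → G i →ₗ[R] G j} [DirectedSystem G (f · · ·)]
  {M : Type*} [AddCommGroup M] [Module R M]

theorem _root_.Module.FinitePresentation.eventually_exists_comp_eq_directLimit
    [Module.FinitePresentation R M] (φ : M →ₗ[R] DirectLimit G f) :
    ∀ᶠ i in atTop, ∃ ψ : M →ₗ[R] G i, of R ι G f i ∘ₗ ψ = φ := by
  obtain ⟨n, K, e, hK⟩ := Module.FinitePresentation.exists_fin R M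
  obtain ⟨i, ψ₀, hψ₀⟩ := (eventually_exists_comp_eq_of_basis (Pi.basisFun R (Fin n))
    (φ ∘ₗ e.symm.toLinearMap ∘ₗ K.mkQ)).exists
  have : Module.Finite R K := Module.Finite.iff_fg.mpr hK
  have hK0 : of R ι G f i ∘ₗ ψ₀ ∘ₗ K.subtype = of R ι G f i ∘ₗ 0 := by
    rw [LinearMap.comp_zero, ← LinearMap.comp_assoc, hψ₀]
    ext x
    simp [(Submodule.Quotient.mk_eq_zero K).2 x.2]
  filter_upwards [eventually_comp_eq_of_of_comp_eq hK0, eventually_ge_atTop i] with j hj hij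
  have hker : K ≤ LinearMap.ker (f i j hij ∘ₗ ψ₀) := fun x hx => by
    simpa using LinearMap.congr_fun (hj hij) ⟨x, hx⟩
  refine ⟨K.liftQ _ hker ∘ₗ e.toLinearMap, ?_⟩
  rw [← LinearMap.comp_assoc, (LinearEquiv.eq_comp_toLinearMap_symm _ _).symm]
  refine Submodule.linearMap_qext K (LinearMap.ext fun x => ?_)
  simpa using LinearMap.congr_fun hψ₀ x

end Module.DirectLimit

namespace IsFilteredRingColimit

section AlgebraSystem

variable {R : Type*} [CommRing R] {J : Type*} [Preorder J]
  {S : J → Type*} [∀ j, CommRing (S j)] [∀ j, Algebra R (S j)]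
  {g : ∀ i j, i ≤ j → S i →ₐ[R] S j} {B : Type*} [CommRing B] [Algebra R B]
  {v : ∀ j, S j →ₐ[R] B}
  (hc : IsFilteredRingColimit S (fun i j h => (g i j h : S i →+* S j)) B
    (fun j => (v j : S j →+* B)))
  {M N : Type*} [AddCommGroup M] [Module R M] [AddCommGroup N] [Module R N]

include hc

theorem isDirectedOrder : IsDirectedOrder J := ⟨hc.directed⟩

theorem nonempty : Nonempty J := let ⟨j, _⟩ := hc.exhaust 0; ⟨j⟩

theorem directedSystem : DirectedSystem S fun i j h => (g i j h).toLinearMap :=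
  ⟨hc.map_self, fun _ _ _ hij hjk => hc.map_map _ _ _ hij hjk⟩

theorem bijective_directLimit_lift [DecidableEq J] :
    Function.Bijective (Module.DirectLimit.lift R J S (fun i j h => (g i j h).toLinearMap)
      (fun j => (v j).toLinearMap) fun i j h => hc.compat i j h) := by
  have := hc.isDirectedOrder; have := hc.nonempty; have := hc.directedSystem
  refine ⟨(injective_iff_map_eq_zero _).2 fun z hz => ?_, fun b => ?_⟩
  · obtain ⟨i, x, rfl⟩ := Module.DirectLimit.exists_of z
    -- `Hg` is not found by unification through the `RingHom`/`LinearMap` coercions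
    rw [Module.DirectLimit.lift_of (Hg := fun i j h => hc.compat i j h)] at hz
    obtain ⟨j, hij, hx⟩ := hc.eq_stage i x 0 (by simpa using hz)
    rw [← Module.DirectLimit.of_f (hij := hij)]
    simp_all
  · obtain ⟨i, x, rfl⟩ := hc.exhaust b
    refine ⟨Module.DirectLimit.of R J S _ i x, ?_⟩
    rw [Module.DirectLimit.lift_of (Hg := fun i j h => hc.compat i j h)]
    rfl

variable (N) in
noncomputable def tensorEquivDirectLimit [DecidableEq J] :
    B ⊗[R] N ≃ₗ[R] Module.DirectLimit (fun j => S j ⊗[R] N)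
      (fun i j h => rTensor N (g i j h).toLinearMap) :=
  (LinearEquiv.ofBijective _ hc.bijective_directLimit_lift).symm.rTensor N ≪≫ₗ
    TensorProduct.directLimitLeft _ N

theorem tensorEquivDirectLimit_comp_rTensor [DecidableEq J] (j : J) :
    (hc.tensorEquivDirectLimit N).toLinearMap ∘ₗ rTensor N (v j).toLinearMap =
      Module.DirectLimit.of R J (fun j => S j ⊗[R] N)
        (fun i j h => rTensor N (g i j h).toLinearMap) j := by
  ext s n
  have hs : (LinearEquiv.ofBijective _ hc.bijective_directLimit_lift).symm (v j s) =
      Module.DirectLimit.of R J S _ j s := by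
    rw [LinearEquiv.symm_apply_eq, LinearEquiv.ofBijective_apply,
      Module.DirectLimit.lift_of (Hg := fun i j h => hc.compat i j h)]
    rfl
  simp [tensorEquivDirectLimit, hs]

theorem eventually_exists_rTensor_comp_eq [Module.FinitePresentation R M]
    (φ : M →ₗ[R] B ⊗[R] N) :
    ∀ᶠ j in atTop, ∃ ψ : M →ₗ[R] S j ⊗[R] N, rTensor N (v j).toLinearMap ∘ₗ ψ = φ := by
  classical
  have := hc.isDirectedOrder; have := hc.nonempty; have := hc.directedSystem
  filter_upwards [Module.FinitePresentation.eventually_exists_comp_eq_directLimit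
    ((hc.tensorEquivDirectLimit N).toLinearMap ∘ₗ φ)] with j ⟨ψ, hψ⟩
  refine ⟨ψ, LinearMap.ext fun x => (hc.tensorEquivDirectLimit N).injective ?_⟩
  simpa [← hc.tensorEquivDirectLimit_comp_rTensor] using LinearMap.congr_fun hψ x

theorem eventually_rTensor_comp_eq [Module.Finite R M] {j : J} {ψ₁ ψ₂ : M →ₗ[R] S j ⊗[R] N}
    (h : rTensor N (v j).toLinearMap ∘ₗ ψ₁ = rTensor N (v j).toLinearMap ∘ₗ ψ₂) :
    ∀ᶠ j' in atTop, ∀ hjj' : j ≤ j',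
      rTensor N (g j j' hjj').toLinearMap ∘ₗ ψ₁ = rTensor N (g j j' hjj').toLinearMap ∘ₗ ψ₂ := by
  classical
  have := hc.isDirectedOrder; have := hc.directedSystem
  exact Module.DirectLimit.eventually_comp_eq_of_of_comp_eq (by
    simpa only [← LinearMap.comp_assoc, hc.tensorEquivDirectLimit_comp_rTensor] using
      congr_arg ((hc.tensorEquivDirectLimit N).toLinearMap ∘ₗ ·) h)

theorem exists_linearEquiv_of_baseChange [Module.FinitePresentation R M]
    [Module.FinitePresentation R N] (e : B ⊗[R] M ≃ₗ[B] B ⊗[R] N) :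
    ∃ j, Nonempty (S j ⊗[R] M ≃ₗ[S j] S j ⊗[R] N) := by
  have := hc.isDirectedOrder; have := hc.nonempty
  obtain ⟨j, ⟨α, hα⟩, ⟨β, hβ⟩⟩ :=
    ((hc.eventually_exists_rTensor_comp_eq ((liftBaseChangeEquiv B).symm e.toLinearMap)).and
      (hc.eventually_exists_rTensor_comp_eq
        ((liftBaseChangeEquiv B).symm e.symm.toLinearMap))).exists
  have hβα : rTensor M (v j).toLinearMap ∘ₗ (β.liftBaseChange (S j)).restrictScalars R ∘ₗ α =
      rTensor M (v j).toLinearMap ∘ₗ TensorProduct.mk R (S j) M 1 := by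
    rw [rTensor_comp_liftBaseChange_comp, rTensor_comp_mk_one, hα, hβ]
    ext m
    simp
  have hαβ : rTensor N (v j).toLinearMap ∘ₗ (α.liftBaseChange (S j)).restrictScalars R ∘ₗ β =
      rTensor N (v j).toLinearMap ∘ₗ TensorProduct.mk R (S j) N 1 := by
    rw [rTensor_comp_liftBaseChange_comp, rTensor_comp_mk_one, hα, hβ]
    ext n
    simp
  obtain ⟨j', hβα', hαβ', hjj'⟩ := ((hc.eventually_rTensor_comp_eq hβα).and
    ((hc.eventually_rTensor_comp_eq hαβ).and (eventually_ge_atTop j))).exists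
  specialize hβα' hjj'
  specialize hαβ' hjj'
  rw [rTensor_comp_liftBaseChange_comp, rTensor_comp_mk_one] at hβα' hαβ'
  exact ⟨j', ⟨.ofLiftBaseChange _ _ hβα' hαβ'⟩⟩

end AlgebraSystem

section RingSystem

variable {I : Type*} [Preorder I] {A : I → Type*} [∀ i, CommRing (A i)]
  {f : ∀ i j, i ≤ j → A i →+* A j} {B : Type*} [CommRing B] {u : ∀ i, A i →+* B}
  (hc : IsFilteredRingColimit A f B u)

include hc

theorem restrict_ge (k : I) :
    IsFilteredRingColimit (fun j : {j // k ≤ j} => A j) (fun a b h => f a b h) B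
      (fun a => u a) where
  directed a b :=
    let ⟨c, hac, hbc⟩ := hc.directed a b
    ⟨⟨c, a.2.trans hac⟩, hac, hbc⟩
  map_self a := hc.map_self a
  map_map a b c := hc.map_map a b c
  compat a b := hc.compat a b
  exhaust x :=
    let ⟨i, y, hy⟩ := hc.exhaust x
    let ⟨c, hic, hkc⟩ := hc.directed i k
    ⟨⟨c, hkc⟩, f i c hic y, (hc.compat i c hic y).trans hy⟩
  eq_stage a x y h :=
    let ⟨j, hj, hxy⟩ := hc.eq_stage a x y h
    ⟨⟨j, a.2.trans hj⟩, hj, hxy⟩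

theorem exists_le_linearEquiv_of_baseChange (k : I) (M N : Type*) [AddCommGroup M]
    [Module (A k) M] [Module.FinitePresentation (A k) M] [AddCommGroup N] [Module (A k) N]
    [Module.FinitePresentation (A k) N]
    (e : letI := (u k).toAlgebra; B ⊗[A k] M ≃ₗ[B] B ⊗[A k] N) :
    ∃ (j : I) (hkj : k ≤ j),
      Nonempty (letI := (f k j hkj).toAlgebra; A j ⊗[A k] M ≃ₗ[A j] A j ⊗[A k] N) := by
  let : ∀ a : {j // k ≤ j}, Algebra (A k) (A a) := fun a => (f k a a.2).toAlgebra
  let := (u k).toAlgebra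
  obtain ⟨j, ⟨e'⟩⟩ := (hc.restrict_ge k).exists_linearEquiv_of_baseChange
    (S := fun a : {j // k ≤ j} => A a)
    (g := fun a b h => { f a b h with commutes' := hc.map_map k a b a.2 h })
    (v := fun a => { u a with commutes' := hc.compat k a a.2 }) e
  exact ⟨j, j.2, ⟨e'⟩⟩

end RingSystem

end IsFilteredRingColimit

theorem finitePresentation_module_model_essentially_unique_general
    {I : Type} [Preorder I] (A : I → Type) [∀ i, CommRing (A i)]
    (f : ∀ i j, i ≤ j → (A i →+* A j))
    (B : Type) [CommRing B] (u : ∀ i, A i →+* B)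
    (hcolim : IsFilteredRingColimit A f B u)
    (E : Type) [AddCommGroup E] [Module B E]
    (i₀ i₁ : I)
    (E₀ : Type) [AddCommGroup E₀] [Module (A i₀) E₀] [Module.FinitePresentation (A i₀) E₀]
    (E₁ : Type) [AddCommGroup E₁] [Module (A i₁) E₁] [Module.FinitePresentation (A i₁) E₁]
    (h₀ : Nonempty (letI := (u i₀).toAlgebra; (B ⊗[A i₀] E₀) ≃ₗ[B] E))
    (h₁ : Nonempty (letI := (u i₁).toAlgebra; (B ⊗[A i₁] E₁) ≃ₗ[B] E)) :
    ∃ (i₂ : I) (hi₀ : i₀ ≤ i₂) (hi₁ : i₁ ≤ i₂),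
      Nonempty (letI := (f i₀ i₂ hi₀).toAlgebra; letI := (f i₁ i₂ hi₁).toAlgebra;
        ((A i₂) ⊗[A i₀] E₀) ≃ₗ[A i₂] ((A i₂) ⊗[A i₁] E₁)) := by
  obtain ⟨e₀⟩ := h₀
  obtain ⟨e₁⟩ := h₁
  obtain ⟨k, hk₀, hk₁⟩ := hcolim.directed i₀ i₁
  let := (u i₀).toAlgebra; let := (u i₁).toAlgebra; let := (u k).toAlgebra
  let := (f i₀ k hk₀).toAlgebra; let := (f i₁ k hk₁).toAlgebra
  have : IsScalarTower (A i₀) (A k) B :=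
    .of_algebraMap_eq fun x => (hcolim.compat i₀ k hk₀ x).symm
  have : IsScalarTower (A i₁) (A k) B :=
    .of_algebraMap_eq fun x => (hcolim.compat i₁ k hk₁ x).symm
  obtain ⟨j, hkj, ⟨e⟩⟩ := hcolim.exists_le_linearEquiv_of_baseChange k
    (A k ⊗[A i₀] E₀) (A k ⊗[A i₁] E₁)
    (AlgebraTensorModule.cancelBaseChange _ _ _ _ _ ≪≫ₗ e₀ ≪≫ₗ e₁.symm ≪≫ₗ
      (AlgebraTensorModule.cancelBaseChange _ _ _ _ _).symm)
  refine ⟨j, hk₀.trans hkj, hk₁.trans hkj, ?_⟩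
  let := (f k j hkj).toAlgebra
  let := (f i₀ j (hk₀.trans hkj)).toAlgebra; let := (f i₁ j (hk₁.trans hkj)).toAlgebra
  have : IsScalarTower (A i₀) (A k) (A j) :=
    .of_algebraMap_eq fun x => (hcolim.map_map i₀ k j hk₀ hkj x).symm
  have : IsScalarTower (A i₁) (A k) (A j) :=
    .of_algebraMap_eq fun x => (hcolim.map_map i₁ k j hk₁ hkj x).symm
  exact ⟨(AlgebraTensorModule.cancelBaseChange _ _ _ _ _).symm ≪≫ₗ e ≪≫ₗ
    AlgebraTensorModule.cancelBaseChange _ _ _ _ _⟩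

/-- **Essential uniqueness of finitely presented models.**
Let `{A i}` be a filtered direct system of commutative rings with direct limit `B`.
If `E` is a finitely presented `B`-module which arises by base change both from a
finitely presented `A i₀`-module `E₀` and from a finitely presented `A i₁`-module
`E₁`, then `E₀` and `E₁` become isomorphic after extension of scalars to some
`A i₂` with `i₂ ≥ i₀` and `i₂ ≥ i₁`. -/
theorem finitePresentation_module_model_essentially_unique
    {I : Type} [Preorder I] (A : I → Type) [∀ i, CommRing (A i)]
    (f : ∀ i j, i ≤ j → (A i →+* A j))
    (B : Type) [CommRing B] (u : ∀ i, A i →+* B)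
    (hcolim : IsFilteredRingColimit A f B u)
    (E : Type) [AddCommGroup E] [Module B E] [Module.FinitePresentation B E]
    (i₀ i₁ : I)
    (E₀ : Type) [AddCommGroup E₀] [Module (A i₀) E₀] [Module.FinitePresentation (A i₀) E₀]
    (E₁ : Type) [AddCommGroup E₁] [Module (A i₁) E₁] [Module.FinitePresentation (A i₁) E₁]
    (h₀ : Nonempty (letI := (u i₀).toAlgebra; (B ⊗[A i₀] E₀) ≃ₗ[B] E))
    (h₁ : Nonempty (letI := (u i₁).toAlgebra; (B ⊗[A i₁] E₁) ≃ₗ[B] E)) :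
    ∃ (i₂ : I) (hi₀ : i₀ ≤ i₂) (hi₁ : i₁ ≤ i₂),
      Nonempty (letI := (f i₀ i₂ hi₀).toAlgebra; letI := (f i₁ i₂ hi₁).toAlgebra;
        ((A i₂) ⊗[A i₀] E₀) ≃ₗ[A i₂] ((A i₂) ⊗[A i₁] E₁)) :=
  finitePresentation_module_model_essentially_unique_general A f B u hcolim E i₀ i₁ E₀ E₁ h₀ h₁
end

section
/- Let $A$ be a commutative noetherian ring and let $E^\bullet$ be a bounded cochain complex of finitely generated projective $A$-modules such that the cohomology module $H^i(E^\bullet)$ is a finitely generated projective $A$-module for every $i$. Then for every commutative $A$-algebra $B$ and every $i$, the canonical homomorphism $B \otimes_A H^i(E^\bullet) \to H^i(B \otimes_A E^\bullet)$ is an isomorphism of $B$-modules. -/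
open TensorProduct

/-- The `i+1`-st cohomology of a cochain complex `(M, d)` of `R`-modules:
the cocycles `ker (d (i+1)) ⊆ M (i+1)` modulo the coboundaries, i.e. modulo the
image of `d i : M i → M (i+1)`. -/
abbrev cochainCohomology (R : Type) [CommRing R]
    (M : ℤ → Type) [∀ i, AddCommGroup (M i)] [∀ i, Module R (M i)]
    (d : ∀ i, M i →ₗ[R] M (i + 1)) (i : ℤ) : Type :=
  ↥(LinearMap.ker (d (i + 1))) ⧸
    (Submodule.comap (LinearMap.ker (d (i + 1))).subtype (LinearMap.range (d i)))

lemma aux_split {A : Type} [CommRing A]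
    (M : ℤ → Type) [∀ i, AddCommGroup (M i)] [∀ i, Module A (M i)]
    (d : ∀ i, M i →ₗ[A] M (i + 1)) (hd : ∀ i, (d (i + 1)) ∘ₗ (d i) = 0) (j : ℤ)
    (hMproj : Module.Projective A (M (j+1)))
    (h1 : Module.Projective A (LinearMap.range (d (j+1))))
    (hH : Module.Projective A (cochainCohomology A M d j)) :
    ∃ (r : M (j+1) →ₗ[A] LinearMap.ker (d (j+1)))
      (s : LinearMap.range (d (j+1)) →ₗ[A] M (j+1))
      (σ : cochainCohomology A M d j →ₗ[A] LinearMap.ker (d (j+1)))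
      (q : LinearMap.ker (d (j+1)) →ₗ[A] LinearMap.range (d j)),
      (∀ x : M (j+1), (r x : M (j+1)) = x - s ((d (j+1)).rangeRestrict x)) ∧
      (∀ z : LinearMap.ker (d (j+1)), r (z : M (j+1)) = z) ∧
      (∀ h : cochainCohomology A M d j,
        (Submodule.Quotient.mk (σ h) : cochainCohomology A M d j) = h) ∧
      (∀ z : LinearMap.ker (d (j+1)),
        ((q z : M (j+1)))
          = (z : M (j+1)) - (σ (Submodule.Quotient.mk z) : M (j+1))) ∧
      Module.Projective A (LinearMap.range (d j)) := by
  haveI := hMproj; haveI := h1; haveI := hH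
  -- section s of rangeRestrict (d (j+1))
  obtain ⟨s, hs⟩ := Module.projective_lifting_property ((d (j+1)).rangeRestrict)
    (LinearMap.id) (LinearMap.surjective_rangeRestrict _)
  have hds : ∀ y : LinearMap.range (d (j+1)), d (j+1) (s y) = (y : M (j+1+1)) := by
    intro y
    exact congrArg Subtype.val (LinearMap.congr_fun hs y)
  have hker : ∀ x : M (j+1),
      ((LinearMap.id : M (j+1) →ₗ[A] M (j+1)) - s ∘ₗ (d (j+1)).rangeRestrict) x
        ∈ LinearMap.ker (d (j+1)) := by
    intro x
    simp only [LinearMap.mem_ker, LinearMap.sub_apply, LinearMap.comp_apply, LinearMap.id_apply,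
      map_sub, hds, LinearMap.codRestrict_apply, sub_self]
  set r : M (j+1) →ₗ[A] LinearMap.ker (d (j+1)) :=
    LinearMap.codRestrict _ _ hker with hrdef
  have hr1 : ∀ x : M (j+1), (r x : M (j+1)) = x - s ((d (j+1)).rangeRestrict x) := by
    intro x; rfl
  have hr2 : ∀ z : LinearMap.ker (d (j+1)), r (z : M (j+1)) = z := by
    intro z
    apply Subtype.ext
    rw [hr1]
    have : (d (j+1)).rangeRestrict (z : M (j+1)) = 0 := Subtype.ext z.2
    rw [this, map_zero, sub_zero]
  -- section σ of the quotient map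
  obtain ⟨σ, hσ0⟩ := Module.projective_lifting_property
    (Submodule.mkQ (Submodule.comap (LinearMap.ker (d (j+1))).subtype (LinearMap.range (d j))))
    (LinearMap.id) (Submodule.mkQ_surjective _)
  have hσ : ∀ h : cochainCohomology A M d j,
      (Submodule.Quotient.mk (σ h) : cochainCohomology A M d j) = h := by
    intro h; exact LinearMap.congr_fun hσ0 h
  -- boundary retraction q
  have hq0 : ∀ z : LinearMap.ker (d (j+1)),
      ((LinearMap.ker (d (j+1))).subtype ∘ₗ
        (LinearMap.id - σ ∘ₗ Submodule.mkQ _)) z ∈ LinearMap.range (d j) := by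
    intro z
    have h0 : z - σ (Submodule.Quotient.mk z) ∈
        Submodule.comap (LinearMap.ker (d (j+1))).subtype (LinearMap.range (d j)) := by
      rw [← Submodule.Quotient.mk_eq_zero]
      rw [Submodule.Quotient.mk_sub]
      rw [hσ]
      simp
    simpa using h0
  set q : LinearMap.ker (d (j+1)) →ₗ[A] LinearMap.range (d j) :=
    LinearMap.codRestrict _ _ hq0 with hqdef
  have hq : ∀ z : LinearMap.ker (d (j+1)),
      ((q z : M (j+1)))
        = (z : M (j+1)) - (σ (Submodule.Quotient.mk z) : M (j+1)) := by
    intro z; rfl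
  -- projectivity of range (d j)
  haveI hkerproj : Module.Projective A (LinearMap.ker (d (j+1))) :=
    Module.Projective.of_split (Submodule.subtype _) r (LinearMap.ext fun z => hr2 z)
  have hmem : ∀ y : LinearMap.range (d j), (y : M (j+1)) ∈ LinearMap.ker (d (j+1)) := by
    rintro ⟨y, x, rfl⟩
    exact LinearMap.congr_fun (hd j) x
  set ι : LinearMap.range (d j) →ₗ[A] LinearMap.ker (d (j+1)) :=
    LinearMap.codRestrict _ (Submodule.subtype _) hmem with hιdef
  have hret : q ∘ₗ ι = LinearMap.id := by
    ext y
    have h1' : Submodule.Quotient.mk (p := Submodule.comap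
        (LinearMap.ker (d (j+1))).subtype (LinearMap.range (d j))) (ι y) = 0 := by
      rw [Submodule.Quotient.mk_eq_zero]
      exact y.2
    simp only [LinearMap.comp_apply, LinearMap.id_apply]
    rw [hq, h1', map_zero]
    simp only [ZeroMemClass.coe_zero, sub_zero]
    rfl
  have : Module.Projective A (LinearMap.range (d j)) :=
    Module.Projective.of_split ι q hret
  exact ⟨r, s, σ, q, hr1, hr2, hσ, hq, this⟩

set_option maxHeartbeats 2000000 in
/-- **Base change of a bounded complex with projective terms and projective
cohomology.**  Let `A` be a commutative noetherian ring and let `(M, d)` be a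
bounded cochain complex of finitely generated projective `A`-modules whose
cohomology modules are all finitely generated and projective.  Then for any
commutative `A`-algebra `B` and any `i`, the canonical `B`-linear map
`B ⊗[A] H^{i+1}(M) → H^{i+1}(B ⊗[A] M)`, `b ⊗ [z] ↦ [b ⊗ z]`, is an isomorphism;
that is, there is a bijective `B`-linear map sending `b ⊗ [z]` to `[b ⊗ z]`. -/
theorem tensor_cohomology_iso_of_bounded_projective
    (A : Type) [CommRing A] [IsNoetherianRing A]
    (M : ℤ → Type) [∀ i, AddCommGroup (M i)] [∀ i, Module A (M i)]
    (d : ∀ i, M i →ₗ[A] M (i + 1))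
    (hd : ∀ i, (d (i + 1)) ∘ₗ (d i) = 0)
    (hbounded : ∃ N : ℕ, ∀ i : ℤ, (N : ℤ) < |i| → Subsingleton (M i))
    (hfin : ∀ i, Module.Finite A (M i))
    (hproj : ∀ i, Module.Projective A (M i))
    (hHfin : ∀ i, Module.Finite A (cochainCohomology A M d i))
    (hHproj : ∀ i, Module.Projective A (cochainCohomology A M d i))
    (B : Type) [CommRing B] [Algebra A B] (i : ℤ) :
    ∃ c : (B ⊗[A] cochainCohomology A M d i) →ₗ[B]
        cochainCohomology B (fun j => B ⊗[A] M j) (fun j => (d j).baseChange B) i,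
      (∀ (b : B) (z : LinearMap.ker (d (i + 1))),
        c (b ⊗ₜ Submodule.Quotient.mk z)
          = Submodule.Quotient.mk
              ⟨b ⊗ₜ (z : M (i + 1)), by
                simp only [LinearMap.mem_ker, LinearMap.baseChange_tmul,
                  LinearMap.mem_ker.mp z.2, tmul_zero]⟩) ∧
      Function.Bijective c := by
  -- Step 1: all boundary modules are projective
  have key : ∀ j : ℤ, Module.Projective A (LinearMap.range (d j)) := by
    obtain ⟨N, hN⟩ := hbounded
    have main : ∀ n : ℕ, ∀ j : ℤ, (N : ℤ) ≤ j + n →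
        Module.Projective A (LinearMap.range (d j)) := by
      intro n
      induction n with
      | zero =>
        intro j hj
        simp only [Nat.cast_zero, add_zero] at hj
        haveI : Subsingleton (M (j+1)) := hN _ (by rw [abs_of_nonneg (by omega)]; omega)
        haveI : Subsingleton (LinearMap.range (d j)) :=
          ⟨fun a b => Subtype.ext (Subsingleton.elim _ _)⟩
        infer_instance
      | succ n ih =>
        intro j hj
        rcases le_or_gt (N : ℤ) (j + n) with h | h
        · exact ih j h
        · have h1 := ih (j+1) (by push_cast at hj ⊢; omega)
          obtain ⟨-, -, -, -, -, -, -, -, hP⟩ :=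
            aux_split M d hd j (hproj (j+1)) h1 (hHproj j)
          exact hP
    intro j
    exact main (N + 1 + (N - j).toNat) j (by push_cast; omega)
  -- Step 2: the splitting data at degrees i and i+1
  obtain ⟨r, s, σ, q, hr1, hr2, hσ, hq, -⟩ :=
    aux_split M d hd i (hproj (i+1)) (key (i+1)) (hHproj i)
  obtain ⟨r₂, s₂, σ₂, q₂, hr1₂, hr2₂, hσ₂, hq₂, -⟩ :=
    aux_split M d hd (i+1) (hproj (i+1+1)) (key (i+1+1)) (hHproj (i+1))
  haveI := key i
  obtain ⟨τ, hτ0⟩ := Module.projective_lifting_property ((d i).rangeRestrict)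
    (LinearMap.id) (LinearMap.surjective_rangeRestrict _)
  have hdτ : ∀ y : LinearMap.range (d i), d i (τ y) = (y : M (i+1)) := by
    intro y; exact congrArg Subtype.val (LinearMap.congr_fun hτ0 y)
  -- the maps of the master identity
  set F : M (i+1) →ₗ[A] M (i+1) :=
    (LinearMap.ker (d (i+1))).subtype ∘ₗ σ ∘ₗ
      (Submodule.comap (LinearMap.ker (d (i+1))).subtype
        (LinearMap.range (d i))).mkQ ∘ₗ r with hF
  set G : M (i+1) →ₗ[A] M i := τ ∘ₗ q ∘ₗ r with hG
  set St : M (i+1+1) →ₗ[A] M (i+1) := s ∘ₗ q₂ ∘ₗ r₂ with hSt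
  have master : ∀ x : M (i+1), x = F x + d i (G x) + St (d (i+1) x) := by
    intro x
    have hz : d (i+1) x ∈ LinearMap.ker (d (i+1+1)) := LinearMap.congr_fun (hd (i+1)) x
    set z : LinearMap.ker (d (i+1+1)) := ⟨d (i+1) x, hz⟩ with hzdef
    have h1 : r₂ (d (i+1) x) = z := hr2₂ z
    have h2 : q₂ z = (d (i+1)).rangeRestrict x := by
      apply Subtype.ext
      rw [hq₂]
      have hmk : (Submodule.Quotient.mk z :
          cochainCohomology A M d (i+1)) = 0 := by
        rw [Submodule.Quotient.mk_eq_zero]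
        exact ⟨x, rfl⟩
      rw [hmk, map_zero]
      simp only [ZeroMemClass.coe_zero, sub_zero, hzdef]
      rfl
    have h3 : St (d (i+1) x) = s ((d (i+1)).rangeRestrict x) := by
      simp only [hSt, LinearMap.comp_apply, h1, h2]
    have h4 : d i (G x) = (q (r x) : M (i+1)) := by
      simp only [hG, LinearMap.comp_apply, hdτ]
    have h5 : F x = (σ (Submodule.Quotient.mk (r x)) : M (i+1)) := rfl
    rw [h3, h4, h5, hq (r x), hr1 x]
    abel
  have masterL : (LinearMap.id : M (i+1) →ₗ[A] M (i+1))
      = F + (d i) ∘ₗ G + St ∘ₗ (d (i+1)) := by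
    ext x
    simpa using master x
  have masterB : ∀ ξ : B ⊗[A] M (i+1),
      ξ = F.baseChange B ξ + (d i).baseChange B (G.baseChange B ξ)
        + St.baseChange B ((d (i+1)).baseChange B ξ) := by
    intro ξ
    have h := LinearMap.congr_fun (congrArg (LinearMap.baseChange B) masterL) ξ
    simpa only [LinearMap.baseChange_add, LinearMap.baseChange_comp,
      LinearMap.baseChange_id, LinearMap.add_apply, LinearMap.comp_apply,
      LinearMap.id_apply] using h
  -- base-changed objects
  have hc0mem : ∀ v : B ⊗[A] (LinearMap.ker (d (i+1))),
      ((LinearMap.ker (d (i+1))).subtype.baseChange B) v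
        ∈ LinearMap.ker ((d (i+1)).baseChange B) := by
    intro v
    rw [LinearMap.mem_ker, ← LinearMap.comp_apply, ← LinearMap.baseChange_comp]
    have hzz : (d (i+1)) ∘ₗ (LinearMap.ker (d (i+1))).subtype = 0 := by
      ext z; exact z.2
    rw [hzz, LinearMap.baseChange_zero, LinearMap.zero_apply]
  set c0 : B ⊗[A] (LinearMap.ker (d (i+1))) →ₗ[B] LinearMap.ker ((d (i+1)).baseChange B) :=
    LinearMap.codRestrict _ ((LinearMap.ker (d (i+1))).subtype.baseChange B) hc0mem with hc0
  set mkB : ↥(LinearMap.ker ((d (i+1)).baseChange B)) →ₗ[B]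
      cochainCohomology B (fun j => B ⊗[A] M j) (fun j => (d j).baseChange B) i :=
    Submodule.mkQ _ with hmkB
  set hmap : B ⊗[A] M (i+1) →ₗ[B] B ⊗[A] cochainCohomology A M d i :=
    ((Submodule.comap (LinearMap.ker (d (i+1))).subtype
      (LinearMap.range (d i))).mkQ ∘ₗ r).baseChange B with hhmap
  have hcond : Submodule.comap (LinearMap.ker ((d (i+1)).baseChange B)).subtype
      (LinearMap.range ((d i).baseChange B)) ≤ LinearMap.ker
      (hmap ∘ₗ (LinearMap.ker ((d (i+1)).baseChange B)).subtype) := by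
    intro x hx
    obtain ⟨u, hu⟩ := hx
    rw [LinearMap.mem_ker, LinearMap.comp_apply]
    have hcoe : (LinearMap.ker ((d (i+1)).baseChange B)).subtype x
        = (d i).baseChange B u := hu.symm
    rw [hcoe, ← LinearMap.comp_apply, hhmap, ← LinearMap.baseChange_comp]
    have hzero : (((Submodule.comap (LinearMap.ker (d (i+1))).subtype
        (LinearMap.range (d i))).mkQ ∘ₗ r) ∘ₗ (d i)) = 0 := by
      ext x'
      simp only [LinearMap.comp_apply, LinearMap.zero_apply, Submodule.mkQ_apply]
      have hm : d i x' ∈ LinearMap.ker (d (i+1)) := LinearMap.congr_fun (hd i) x'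
      have hrx : r (d i x') = ⟨d i x', hm⟩ := hr2 ⟨d i x', hm⟩
      rw [hrx, Submodule.Quotient.mk_eq_zero]
      exact ⟨x', rfl⟩
    rw [hzero, LinearMap.baseChange_zero, LinearMap.zero_apply]
  set c' : cochainCohomology B (fun j => B ⊗[A] M j) (fun j => (d j).baseChange B) i →ₗ[B]
      B ⊗[A] cochainCohomology A M d i :=
    Submodule.liftQ _ (hmap ∘ₗ (LinearMap.ker ((d (i+1)).baseChange B)).subtype) hcond
    with hc'
  refine ⟨mkB ∘ₗ c0 ∘ₗ σ.baseChange B, ?_, ?_⟩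
  · intro b z
    show mkB (c0 ((σ.baseChange B) (b ⊗ₜ Submodule.Quotient.mk z))) = _
    rw [LinearMap.baseChange_tmul]
    have hc0v : c0 (b ⊗ₜ σ (Submodule.Quotient.mk z))
        = ⟨b ⊗ₜ (σ (Submodule.Quotient.mk z) : M (i+1)), by
            simp only [LinearMap.mem_ker, LinearMap.baseChange_tmul,
              LinearMap.mem_ker.mp (σ (Submodule.Quotient.mk z)).2, tmul_zero]⟩ := by
      apply Subtype.ext
      simp [hc0, LinearMap.baseChange_tmul]
    rw [hc0v, hmkB, Submodule.mkQ_apply, Submodule.Quotient.eq]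
    rw [Submodule.mem_comap, map_sub, Submodule.subtype_apply, Submodule.subtype_apply]
    refine ⟨-(b ⊗ₜ τ (q z)), ?_⟩
    rw [map_neg, LinearMap.baseChange_tmul, hdτ, hq z, tmul_sub]
    rw [neg_sub]
  · constructor
    · have key2 : ∀ x, c' ((mkB ∘ₗ c0 ∘ₗ σ.baseChange B) x) = x := by
        intro x
        induction x using TensorProduct.induction_on with
        | zero => simp
        | tmul b hcl =>
          obtain ⟨z, rfl⟩ := Submodule.Quotient.mk_surjective _ hcl
          simp only [LinearMap.comp_apply, LinearMap.baseChange_tmul]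
          rw [hmkB, Submodule.mkQ_apply, hc', Submodule.liftQ_apply]
          simp only [LinearMap.comp_apply]
          have hsub : (LinearMap.ker ((d (i+1)).baseChange B)).subtype
              (c0 (b ⊗ₜ σ (Submodule.Quotient.mk z)))
              = b ⊗ₜ (σ (Submodule.Quotient.mk z) : M (i+1)) := by
            simp [hc0, LinearMap.baseChange_tmul]
          rw [hsub, hhmap, LinearMap.baseChange_tmul]
          simp only [LinearMap.comp_apply, hr2 (σ (Submodule.Quotient.mk z)),
            Submodule.mkQ_apply, hσ]
        | add u v hu hv => simp only [map_add, hu, hv]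
      exact Function.LeftInverse.injective key2
    · intro y
      obtain ⟨ξ, rfl⟩ := Submodule.Quotient.mk_surjective _ y
      refine ⟨c' (Submodule.Quotient.mk ξ), ?_⟩
      rw [hc', Submodule.liftQ_apply]
      show mkB (c0 ((σ.baseChange B)
        ((hmap ∘ₗ (LinearMap.ker ((d (i+1)).baseChange B)).subtype) ξ))) = _
      simp only [LinearMap.comp_apply, Submodule.subtype_apply]
      have hcoe : ((c0 ((σ.baseChange B)
          (hmap (ξ : B ⊗[A] M (i+1))))) : B ⊗[A] M (i+1))
          = F.baseChange B (ξ : B ⊗[A] M (i+1)) := by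
        show ((LinearMap.ker (d (i+1))).subtype.baseChange B)
          ((σ.baseChange B) (hmap (ξ : B ⊗[A] M (i+1)))) = _
        rw [hF, hhmap]
        simp only [LinearMap.baseChange_comp, LinearMap.comp_apply]
      have hξ : (d (i+1)).baseChange B (ξ : B ⊗[A] M (i+1)) = 0 := ξ.2
      have hmb := masterB (ξ : B ⊗[A] M (i+1))
      rw [hξ, map_zero, add_zero] at hmb
      rw [hmkB, Submodule.mkQ_apply, Submodule.Quotient.eq, Submodule.mem_comap, map_sub,
        Submodule.subtype_apply, Submodule.subtype_apply]
      refine ⟨-(G.baseChange B (ξ : B ⊗[A] M (i+1))), ?_⟩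
      rw [map_neg, hcoe]
      nth_rewrite 3 [hmb]
      abel
end

section
/- Let $S$ be a scheme of finite type over $\mathrm{Spec}\,\mathbb{Z}$. Then every nonempty locally closed subset $Z$ of the underlying topological space of $S$ contains a point that is a closed point of $S$. -/
open AlgebraicGeometry

/-!
`Spec ℤ` is a Jacobson space, since `ℤ` is one-dimensional with zero Jacobson radical, and being
Jacobson ascends along morphisms locally of finite type. In a Jacobson space every nonempty
locally closed subset meets the closed points.
-/

theorem isJacobsonRing_of_jacobson_bot_eq_bot {R : Type*} [CommRing R] [Ring.DimensionLEOne R]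
    (h : (⊥ : Ideal R).jacobson = ⊥) : IsJacobsonRing R := by
  rw [isJacobsonRing_iff_prime_eq]
  intro P hP
  rcases eq_or_ne P ⊥ with rfl | hne
  · exact h
  · have : P.IsMaximal := hP.isMaximal hne
    exact Ideal.jacobson_eq_self_of_isMaximal

theorem Int.jacobson_bot : (⊥ : Ideal ℤ).jacobson = ⊥ := by
  refine le_antisymm (fun x hx => ?_) Ideal.le_jacobson
  rw [Ideal.mem_jacobson_bot] at hx
  have h1 := hx 1
  have h2 := hx (-1)
  simp only [mul_one, mul_neg, Int.isUnit_iff] at h1 h2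
  rw [Ideal.mem_bot]
  omega

instance Int.isJacobsonRing : IsJacobsonRing ℤ :=
  isJacobsonRing_of_jacobson_bot_eq_bot Int.jacobson_bot

theorem exists_isClosed_point_of_isLocallyClosed_of_finiteType_over_int_general
    (S : Scheme) (f : S ⟶ Spec (CommRingCat.of ℤ))
    [LocallyOfFiniteType f]
    (Z : Set S) (hZ : IsLocallyClosed Z) (hne : Z.Nonempty) :
    ∃ x ∈ Z, IsClosed ({x} : Set S) :=
  have : JacobsonSpace S := LocallyOfFiniteType.jacobsonSpace f
  nonempty_inter_closedPoints hne hZ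

/-- **Density of closed points on arithmetic schemes.**
Let `S` be a scheme of finite type over `Spec ℤ` (i.e. the structure morphism
`S ⟶ Spec ℤ` is quasi-compact and locally of finite type).  Then every nonempty
locally closed subset `Z` of the underlying topological space of `S` contains a
point that is a closed point of `S`. -/
theorem exists_isClosed_point_of_isLocallyClosed_of_finiteType_over_int
    (S : Scheme) (f : S ⟶ Spec (CommRingCat.of ℤ))
    [LocallyOfFiniteType f] [QuasiCompact f]
    (Z : Set S) (hZ : IsLocallyClosed Z) (hne : Z.Nonempty) :
    ∃ x ∈ Z, IsClosed ({x} : Set S) :=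
  exists_isClosed_point_of_isLocallyClosed_of_finiteType_over_int_general S f Z hZ hne
end
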